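/- Let P, Q be Borel probability measures on ℝ with finite second moments, with cumulative distribution functions F and G and generalized inverses F⁻, G⁻. Let μ⁻ be the pushforward of Lebesgue measure on (0,1) under the map u ↦ (F⁻(u), G⁻(1−u)) (the antitone coupling). Then μ⁻ ∈ M(P,Q) and ∬ xy dμ⁻(x,y) = inf_{μ ∈ M(P,Q)} ∬ xy dμ(x,y). -/

import Mathlib

/-!
Write `x * y = ∫∫ layer x s * layer y t ds dt`, where `layer a` is the signed indicator of the
interval between `0` and `a`. By Fubini, `∫ x y dμ` becomes the integral over `(s, t)` of the
joint survival function `μ(X > s, Y > t)` plus terms that only depend on the marginals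
(Hoeffding's identity). Every coupling satisfies the Fréchet bound
`μ(X > s, Y > t) ≥ (1 - F s - G t)⁺`, and the antitone coupling attains it, since
`F⁻ u > s ↔ u > F s` and `G⁻ (1 - u) > t ↔ u < 1 - G t` for `u ∈ (0, 1)`.
-/

open MeasureTheory

def IsCoupling (P Q : Measure ℝ) (μ : Measure (ℝ × ℝ)) : Prop :=
  IsProbabilityMeasure μ ∧ μ.map Prod.fst = P ∧ μ.map Prod.snd = Q

open Set ProbabilityTheory

noncomputable def layer (a s : ℝ) : ℝ := (if s < a then 1 else 0) - (if s < 0 then 1 else 0)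

lemma layer_eq_indicator_sub_indicator (a : ℝ) :
    layer a = (Ico 0 a).indicator 1 - (Ico a 0).indicator 1 := by
  ext s
  simp only [layer, Pi.sub_apply, indicator, mem_Ico, Pi.one_apply]
  split_ifs <;> grind

lemma abs_layer_eq_indicator_add_indicator (a : ℝ) :
    (fun s => |layer a s|) = (Ico 0 a).indicator 1 + (Ico a 0).indicator 1 := by
  ext s
  simp only [layer, Pi.add_apply, indicator, mem_Ico, Pi.one_apply]
  split_ifs <;> grind

lemma integrable_indicator_Ico_one (a b : ℝ) :
    Integrable ((Ico a b).indicator (1 : ℝ → ℝ)) volume :=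
  (integrable_indicator_iff measurableSet_Ico).2 (integrableOn_const measure_Ico_lt_top.ne)

lemma integrable_layer (a : ℝ) : Integrable (layer a) volume := by
  rw [layer_eq_indicator_sub_indicator]
  exact (integrable_indicator_Ico_one 0 a).sub (integrable_indicator_Ico_one a 0)

lemma integral_layer (a : ℝ) : ∫ s, layer a s = a := by
  rw [layer_eq_indicator_sub_indicator, integral_sub' (integrable_indicator_Ico_one 0 a)
    (integrable_indicator_Ico_one a 0), integral_indicator_one measurableSet_Ico,
    integral_indicator_one measurableSet_Ico, Real.volume_real_Ico, Real.volume_real_Ico,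
    sub_zero, zero_sub, max_zero_sub_max_neg_zero_eq_self]

lemma integral_abs_layer (a : ℝ) : ∫ s, |layer a s| = |a| := by
  rw [abs_layer_eq_indicator_add_indicator, integral_add' (integrable_indicator_Ico_one 0 a)
    (integrable_indicator_Ico_one a 0), integral_indicator_one measurableSet_Ico,
    integral_indicator_one measurableSet_Ico, Real.volume_real_Ico, Real.volume_real_Ico,
    sub_zero, zero_sub, max_zero_add_max_neg_zero_eq_abs_self]

lemma measurable_layer : Measurable (Function.uncurry layer) :=
  (measurable_const.ite (measurableSet_lt measurable_snd measurable_fst) measurable_const).sub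
    (measurable_const.ite (measurableSet_lt measurable_snd measurable_const) measurable_const)

section Representation

variable {μ : Measure (ℝ × ℝ)}

lemma integrable_layer_mul_layer_prod (hμ : Integrable (fun p : ℝ × ℝ => p.1 * p.2) μ) :
    Integrable (fun z : (ℝ × ℝ) × (ℝ × ℝ) => layer z.1.1 z.2.1 * layer z.1.2 z.2.2)
      (μ.prod volume) := by
  have hmeas : Measurable fun z : (ℝ × ℝ) × (ℝ × ℝ) => layer z.1.1 z.2.1 * layer z.1.2 z.2.2 :=
    (measurable_layer.comp (measurable_fst.fst.prodMk measurable_snd.fst)).mul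
      (measurable_layer.comp (measurable_fst.snd.prodMk measurable_snd.snd))
  refine (integrable_prod_iff hmeas.aestronglyMeasurable).2 ⟨ae_of_all _ fun p => ?_, ?_⟩
  · rw [Measure.volume_eq_prod]
    exact (integrable_layer p.1).mul_prod (integrable_layer p.2)
  · have hnorm (p : ℝ × ℝ) : ∫ q : ℝ × ℝ, ‖layer p.1 q.1 * layer p.2 q.2‖ = ‖p.1 * p.2‖ := by
      simp_rw [norm_mul, Real.norm_eq_abs]
      rw [Measure.volume_eq_prod, integral_prod_mul (fun s => |layer p.1 s|)
        (fun t => |layer p.2 t|), integral_abs_layer, integral_abs_layer]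
    simpa only [hnorm] using hμ.norm

lemma integral_mul_eq_integral_integral_layer_mul_layer [SFinite μ]
    (hμ : Integrable (fun p : ℝ × ℝ => p.1 * p.2) μ) :
    ∫ p, p.1 * p.2 ∂μ = ∫ q : ℝ × ℝ, ∫ p, layer p.1 q.1 * layer p.2 q.2 ∂μ := by
  rw [← integral_integral_swap (integrable_layer_mul_layer_prod hμ)]
  refine integral_congr_ae (ae_of_all _ fun p => ?_)
  simp only [Measure.volume_eq_prod, integral_prod_mul (layer p.1) (layer p.2), integral_layer]

end Representation

section Marginals

variable {μ : Measure (ℝ × ℝ)} [IsFiniteMeasure μ]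

lemma integral_layer_mul_layer (s t : ℝ) :
    ∫ p, layer p.1 s * layer p.2 t ∂μ =
      μ.real (Ioi s ×ˢ Ioi t) - (if t < 0 then 1 else 0) * (μ.map Prod.fst).real (Ioi s)
        - (if s < 0 then 1 else 0) * (μ.map Prod.snd).real (Ioi t)
        + (if s < 0 then 1 else 0) * (if t < 0 then 1 else 0) * μ.real univ := by
  set a : ℝ := if s < 0 then 1 else 0
  set b : ℝ := if t < 0 then 1 else 0
  have hpoint : (fun p : ℝ × ℝ => layer p.1 s * layer p.2 t) = fun p =>
      (Ioi s ×ˢ Ioi t).indicator 1 p - b * (Prod.fst ⁻¹' Ioi s).indicator 1 p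
        - a * (Prod.snd ⁻¹' Ioi t).indicator 1 p + a * b := by
    ext p
    simp only [layer, indicator, mem_prod, mem_preimage, mem_Ioi, Pi.one_apply, a, b]
    split_ifs <;> grind
  have h1 : Integrable ((Ioi s ×ˢ Ioi t).indicator (1 : ℝ × ℝ → ℝ)) μ :=
    (integrable_const 1).indicator (measurableSet_Ioi.prod measurableSet_Ioi)
  have h2 : Integrable ((Prod.fst ⁻¹' Ioi s).indicator (1 : ℝ × ℝ → ℝ)) μ :=
    (integrable_const 1).indicator (measurable_fst measurableSet_Ioi)
  have h3 : Integrable ((Prod.snd ⁻¹' Ioi t).indicator (1 : ℝ × ℝ → ℝ)) μ :=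
    (integrable_const 1).indicator (measurable_snd measurableSet_Ioi)
  have h12 : Integrable (fun p => (Ioi s ×ˢ Ioi t).indicator 1 p
      - b * (Prod.fst ⁻¹' Ioi s).indicator 1 p) μ := h1.sub (h2.const_mul b)
  have h123 : Integrable (fun p => (Ioi s ×ˢ Ioi t).indicator 1 p
      - b * (Prod.fst ⁻¹' Ioi s).indicator 1 p - a * (Prod.snd ⁻¹' Ioi t).indicator 1 p) μ :=
    h12.sub (h3.const_mul a)
  rw [hpoint, integral_add h123 (integrable_const _), integral_sub h12 (h3.const_mul a),
    integral_sub h1 (h2.const_mul b),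
    integral_const_mul, integral_const_mul, integral_const,
    integral_indicator_one (measurableSet_Ioi.prod measurableSet_Ioi),
    integral_indicator_one (measurable_fst measurableSet_Ioi),
    integral_indicator_one (measurable_snd measurableSet_Ioi),
    map_measureReal_apply measurable_fst measurableSet_Ioi,
    map_measureReal_apply measurable_snd measurableSet_Ioi, smul_eq_mul]
  ring

end Marginals

lemma measureReal_univ_eq_map_fst (μ : Measure (ℝ × ℝ)) :
    μ.real univ = (μ.map Prod.fst).real univ := by
  rw [map_measureReal_apply measurable_fst MeasurableSet.univ, preimage_univ]

lemma integral_mul_le_of_measureReal_Ioi_prod_Ioi_le {μ ν : Measure (ℝ × ℝ)}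
    [IsFiniteMeasure μ] [IsFiniteMeasure ν]
    (hfst : μ.map Prod.fst = ν.map Prod.fst) (hsnd : μ.map Prod.snd = ν.map Prod.snd)
    (hμ : Integrable (fun p : ℝ × ℝ => p.1 * p.2) μ)
    (hν : Integrable (fun p : ℝ × ℝ => p.1 * p.2) ν)
    (hle : ∀ s t, μ.real (Ioi s ×ˢ Ioi t) ≤ ν.real (Ioi s ×ˢ Ioi t)) :
    ∫ p, p.1 * p.2 ∂μ ≤ ∫ p, p.1 * p.2 ∂ν := by
  rw [integral_mul_eq_integral_integral_layer_mul_layer hμ,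
    integral_mul_eq_integral_integral_layer_mul_layer hν]
  refine integral_mono (integrable_layer_mul_layer_prod hμ).integral_prod_right
    (integrable_layer_mul_layer_prod hν).integral_prod_right fun q => ?_
  simp only [integral_layer_mul_layer, hfst, hsnd, measureReal_univ_eq_map_fst μ,
    measureReal_univ_eq_map_fst ν]
  linarith [hle q.1 q.2]

lemma map_fst_real_Ioi_sub_map_snd_real_Iic_le (μ : Measure (ℝ × ℝ)) [IsFiniteMeasure μ]
    (s t : ℝ) :
    (μ.map Prod.fst).real (Ioi s) - (μ.map Prod.snd).real (Iic t) ≤ μ.real (Ioi s ×ˢ Ioi t) := by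
  rw [map_measureReal_apply measurable_fst measurableSet_Ioi,
    map_measureReal_apply measurable_snd measurableSet_Iic, sub_le_iff_le_add]
  refine (measureReal_mono fun p hp => ?_).trans (measureReal_union_le _ _)
  rcases le_or_gt p.2 t with h | h
  · exact Or.inr h
  · exact Or.inl ⟨hp, h⟩

section Quantile

open Filter

variable (P : Measure ℝ)

noncomputable def quantile (u : ℝ) : ℝ := sInf {x | u ≤ cdf P x}

lemma nonempty_le_cdf {u : ℝ} (hu : u < 1) : {x | u ≤ cdf P x}.Nonempty :=
  (((tendsto_cdf_atTop P).eventually (eventually_gt_nhds hu)).exists).imp fun _ => le_of_lt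

lemma bddBelow_le_cdf {u : ℝ} (hu : 0 < u) : BddBelow {x | u ≤ cdf P x} := by
  obtain ⟨z, hz⟩ := eventually_atBot.1 ((tendsto_cdf_atBot P).eventually (eventually_lt_nhds hu))
  exact ⟨z, fun y hy => le_of_not_gt fun hyz => (hz y hyz.le).not_ge hy⟩

lemma le_cdf_quantile {u : ℝ} (hu : u ∈ Ioo 0 1) : u ≤ cdf P (quantile P u) := by
  refine ge_of_tendsto (((cdf P).right_continuous _).mono Ioi_subset_Ici_self).tendsto ?_
  filter_upwards [self_mem_nhdsWithin] with y hy
  obtain ⟨x, hx, hxy⟩ := (csInf_lt_iff (bddBelow_le_cdf P hu.1) (nonempty_le_cdf P hu.2)).1 hy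
  exact hx.trans ((cdf P).mono hxy.le)

lemma quantile_le_iff {u x : ℝ} (hu : u ∈ Ioo 0 1) : quantile P u ≤ x ↔ u ≤ cdf P x :=
  ⟨fun h => (le_cdf_quantile P hu).trans ((cdf P).mono h),
    fun h => csInf_le (bddBelow_le_cdf P hu.1) h⟩

lemma lt_quantile_iff {u x : ℝ} (hu : u ∈ Ioo 0 1) : x < quantile P u ↔ cdf P x < u :=
  not_iff_not.1 (by simpa only [not_lt] using quantile_le_iff P hu)

lemma monotoneOn_quantile : MonotoneOn (quantile P) (Ioo 0 1) := fun _ hu _ hv huv =>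
  csInf_le_csInf (bddBelow_le_cdf P hu.1) (nonempty_le_cdf P hv.2) fun _ hx => huv.trans hx

lemma aemeasurable_quantile : AEMeasurable (quantile P) (volume.restrict (Ioo 0 1)) :=
  aemeasurable_restrict_of_monotoneOn measurableSet_Ioo (monotoneOn_quantile P)

instance : IsProbabilityMeasure (volume.restrict (Ioo (0 : ℝ) 1)) :=
  ⟨by simp [Real.volume_Ioo]⟩

lemma map_quantile [IsProbabilityMeasure P] : (volume.restrict (Ioo 0 1)).map (quantile P) = P := by
  have : IsProbabilityMeasure ((volume.restrict (Ioo (0 : ℝ) 1)).map (quantile P)) :=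
    Measure.isProbabilityMeasure_map (aemeasurable_quantile P)
  refine Measure.ext_of_Iic _ _ fun x => ?_
  have hpre : quantile P ⁻¹' Iic x ∩ Ioo 0 1 = Ioc 0 (cdf P x) ∩ Ioo 0 1 := by
    ext u
    simp only [mem_inter_iff, mem_preimage, mem_Iic, mem_Ioc, and_congr_left_iff]
    exact fun hu => by rw [quantile_le_iff P hu]; exact ⟨fun h => ⟨hu.1, h⟩, And.right⟩
  rw [Measure.map_apply_of_aemeasurable (aemeasurable_quantile P) measurableSet_Iic,
    Measure.restrict_apply' measurableSet_Ioo, hpre,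
    measure_congr ((ae_eq_refl _).inter Ioo_ae_eq_Ioc), Ioc_inter_Ioc, max_self,
    min_eq_left (cdf_le_one P x), Real.volume_Ioc, sub_zero, ofReal_cdf]

lemma map_one_sub_restrict_Ioo :
    (volume.restrict (Ioo (0 : ℝ) 1)).map (fun u => 1 - u) = volume.restrict (Ioo 0 1) := by
  have h := (Measure.measurePreserving_sub_left volume (1 : ℝ)).restrict_preimage
    (measurableSet_Ioo (a := (0 : ℝ)) (b := 1))
  rw [preimage_const_sub_Ioo, sub_zero, sub_self] at h
  exact h.map_eq

lemma map_quantile_one_sub [IsProbabilityMeasure P] :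
    (volume.restrict (Ioo 0 1)).map (fun u => quantile P (1 - u)) = P := by
  have hq : AEMeasurable (quantile P) ((volume.restrict (Ioo 0 1)).map (fun u => 1 - u)) := by
    rw [map_one_sub_restrict_Ioo]
    exact aemeasurable_quantile P
  rw [← Function.comp_def, ← AEMeasurable.map_map_of_aemeasurable hq (by fun_prop),
    map_one_sub_restrict_Ioo, map_quantile]

end Quantile

section AntitoneCoupling

variable (P Q : Measure ℝ)

lemma aemeasurable_quantile_one_sub :
    AEMeasurable (fun u => quantile P (1 - u)) (volume.restrict (Ioo 0 1)) :=
  aemeasurable_restrict_of_antitoneOn measurableSet_Ioo fun u hu v hv huv =>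
    monotoneOn_quantile P ⟨by linarith [hv.2], by linarith [hv.1]⟩
      ⟨by linarith [hu.2], by linarith [hu.1]⟩ (by linarith)

noncomputable def antitoneCoupling : Measure (ℝ × ℝ) :=
  (volume.restrict (Ioo 0 1)).map fun u => (quantile P u, quantile Q (1 - u))

lemma aemeasurable_quantile_prodMk_quantile_one_sub :
    AEMeasurable (fun u => (quantile P u, quantile Q (1 - u))) (volume.restrict (Ioo 0 1)) :=
  (aemeasurable_quantile P).prodMk (aemeasurable_quantile_one_sub Q)

lemma isCoupling_antitoneCoupling [IsProbabilityMeasure P] [IsProbabilityMeasure Q] :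
    IsCoupling P Q (antitoneCoupling P Q) := by
  have hT := aemeasurable_quantile_prodMk_quantile_one_sub P Q
  refine ⟨Measure.isProbabilityMeasure_map hT, ?_, ?_⟩
  · rw [antitoneCoupling, AEMeasurable.map_map_of_aemeasurable measurable_fst.aemeasurable hT]
    exact map_quantile P
  · rw [antitoneCoupling, AEMeasurable.map_map_of_aemeasurable measurable_snd.aemeasurable hT]
    exact map_quantile_one_sub Q

lemma antitoneCoupling_real_Ioi_prod_Ioi (s t : ℝ) :
    (antitoneCoupling P Q).real (Ioi s ×ˢ Ioi t) = max (1 - cdf P s - cdf Q t) 0 := by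
  have hpre : (fun u => (quantile P u, quantile Q (1 - u))) ⁻¹' (Ioi s ×ˢ Ioi t) ∩ Ioo 0 1
      = Ioo (cdf P s) (1 - cdf Q t) := by
    ext u
    simp only [mem_inter_iff, mem_preimage, mem_prod, mem_Ioi, mem_Ioo]
    constructor
    · rintro ⟨⟨hs, ht⟩, hu⟩
      rw [lt_quantile_iff P hu] at hs
      rw [lt_quantile_iff Q ⟨by linarith [hu.2], by linarith [hu.1]⟩] at ht
      exact ⟨hs, by linarith⟩
    · rintro ⟨hs, ht⟩
      have hu : u ∈ Ioo 0 1 := ⟨(cdf_nonneg P s).trans_lt hs, by linarith [cdf_nonneg Q t]⟩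
      rw [lt_quantile_iff P hu, lt_quantile_iff Q ⟨by linarith [hu.2], by linarith [hu.1]⟩]
      exact ⟨⟨hs, by linarith⟩, hu⟩
  rw [antitoneCoupling, map_measureReal_apply_of_aemeasurable
    (aemeasurable_quantile_prodMk_quantile_one_sub P Q) (measurableSet_Ioi.prod measurableSet_Ioi),
    measureReal_restrict_apply' measurableSet_Ioo, hpre, Real.volume_real_Ioo, sub_right_comm]

end AntitoneCoupling

namespace IsCoupling

variable {P Q : Measure ℝ} {μ : Measure (ℝ × ℝ)}

lemma integrable_mul (h : IsCoupling P Q μ) (hP : Integrable (fun x : ℝ => x ^ 2) P)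
    (hQ : Integrable (fun y : ℝ => y ^ 2) Q) : Integrable (fun p : ℝ × ℝ => p.1 * p.2) μ := by
  obtain ⟨-, hfst, hsnd⟩ := h
  have hP2 : MemLp id 2 (μ.map Prod.fst) :=
    hfst ▸ (memLp_two_iff_integrable_sq aestronglyMeasurable_id).2 hP
  have hQ2 : MemLp id 2 (μ.map Prod.snd) :=
    hsnd ▸ (memLp_two_iff_integrable_sq aestronglyMeasurable_id).2 hQ
  exact (hP2.comp_of_map measurable_fst.aemeasurable).integrable_mul
    (hQ2.comp_of_map measurable_snd.aemeasurable)

lemma max_le_measureReal_Ioi_prod_Ioi [IsProbabilityMeasure P] [IsProbabilityMeasure Q]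
    (h : IsCoupling P Q μ) (s t : ℝ) : max (1 - cdf P s - cdf Q t) 0 ≤ μ.real (Ioi s ×ˢ Ioi t) := by
  obtain ⟨hμ, hfst, hsnd⟩ := h
  refine max_le ?_ measureReal_nonneg
  have hPs : P.real (Ioi s) = 1 - cdf P s := by
    rw [← compl_Iic, probReal_compl_eq_one_sub measurableSet_Iic, cdf_eq_real]
  simpa only [hfst, hsnd, hPs, ← cdf_eq_real] using map_fst_real_Ioi_sub_map_snd_real_Iic_le μ s t

lemma integral_mul_le {ν : Measure (ℝ × ℝ)} (hμ : IsCoupling P Q μ) (hν : IsCoupling P Q ν)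
    (hP : Integrable (fun x : ℝ => x ^ 2) P) (hQ : Integrable (fun y : ℝ => y ^ 2) Q)
    (hle : ∀ s t, μ.real (Ioi s ×ˢ Ioi t) ≤ ν.real (Ioi s ×ˢ Ioi t)) :
    ∫ p, p.1 * p.2 ∂μ ≤ ∫ p, p.1 * p.2 ∂ν :=
  have := hμ.1
  have := hν.1
  integral_mul_le_of_measureReal_Ioi_prod_Ioi_le (hμ.2.1.trans hν.2.1.symm)
    (hμ.2.2.trans hν.2.2.symm) (hμ.integrable_mul hP hQ) (hν.integrable_mul hP hQ) hle

end IsCoupling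

theorem stmt_16 (P Q : Measure ℝ) [IsProbabilityMeasure P] [IsProbabilityMeasure Q]
    (hP : Integrable (fun x : ℝ => x ^ 2) P)
    (hQ : Integrable (fun y : ℝ => y ^ 2) Q)
    (F G : ℝ → ℝ)
    (hF : ∀ x : ℝ, F x = (P (Set.Iic x)).toReal)
    (hG : ∀ y : ℝ, G y = (Q (Set.Iic y)).toReal)
    (Finv Ginv : ℝ → ℝ)
    (hFinv : ∀ ξ : ℝ, Finv ξ = sInf {x : ℝ | ξ ≤ F x})
    (hGinv : ∀ ξ : ℝ, Ginv ξ = sInf {y : ℝ | ξ ≤ G y})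
    (μMinus : Measure (ℝ × ℝ))
    (hμMinus : μMinus =
      (volume.restrict (Set.Ioo (0 : ℝ) 1)).map (fun u => (Finv u, Ginv (1 - u)))) :
    IsCoupling P Q μMinus ∧
    (∫ p, p.1 * p.2 ∂μMinus) =
      sInf {r : ℝ | ∃ μ : Measure (ℝ × ℝ), IsCoupling P Q μ ∧
        r = ∫ p, p.1 * p.2 ∂μ} := by
  have hFinv' : Finv = quantile P := by
    ext ξ
    simp only [hFinv, hF, quantile, cdf_eq_real, measureReal_def]
  have hGinv' : Ginv = quantile Q := by
    ext ξ
    simp only [hGinv, hG, quantile, cdf_eq_real, measureReal_def]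
  obtain rfl : μMinus = antitoneCoupling P Q := by rw [hμMinus, hFinv', hGinv', antitoneCoupling]
  have hanti := isCoupling_antitoneCoupling P Q
  refine ⟨hanti, Eq.symm <| IsLeast.csInf_eq ⟨⟨_, hanti, rfl⟩, ?_⟩⟩
  rintro _ ⟨μ, hμ, rfl⟩
  refine hanti.integral_mul_le hμ hP hQ fun s t => ?_
  rw [antitoneCoupling_real_Ioi_prod_Ioi]
  exact hμ.max_le_measureReal_Ioi_prod_Ioi s t
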